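/- For an integer d ≥ 2, set h(l) = (2l+d−1)(l+d−2)!/(l!(d−1)!) for l ∈ ℕ. Let 𝓗 be a separable real Hilbert space and, for j = 1, 2, let (b_l^{(j)})_{l∈ℕ} be sequences of compact self-adjoint positive injective bounded operators on 𝓗. For each l, let (f_{l,n})_{n∈ℕ} be a Hilbert basis of eigenvectors of b_l^{(1)} with eigenvalues μ_{l,n} > 0, and set M_l² := Σ_{m,n∈ℕ} ( ⟨b_l^{(2)} f_{l,m}, f_{l,n}⟩ / (√μ_{l,m} · √μ_{l,n}) − δ_{mn} )² ∈ [0,∞]. Then for every u ∈ 𝓗 with u ≠ 0, as an inequality in [0,∞], Σ_{l∈ℕ} h(l) · ( ⟨b_l^{(2)} u, u⟩ / ⟨b_l^{(1)} u, u⟩ − 1 )² ≤ Σ_{l∈ℕ} h(l) · M_l². In particular, finiteness of the operator-valued (Hilbert–Schmidt) series implies finiteness of the scalar-projection series for every direction u. -/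

import Mathlib

/-! Put `g i = √(μ i) ⟪e i, u⟫` for the eigenbasis `e` of `b₁ l`. Expanding `u` in `e` gives
`⟪b₁ l u, u⟫ = ∑ g i ^ 2 =: β` and `⟪b₂ l u, u⟫ - β = ∑_{(m, n)} g m g n A m n`, where `A` is the
matrix of `(b₁ l)^{-1/2} (b₂ l) (b₁ l)^{-1/2} - 1`. Cauchy–Schwarz over `ℕ × ℕ`, with
`∑ (g m g n)² = β²`, yields `(⟪b₂ l u, u⟫ / β - 1)² ≤ ∑ (A m n)²` for every `l`; the series
inequality follows termwise. -/

open RealInnerProductSpace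
open scoped ENNReal

/-- Dimension of the space of degree-`l` spherical harmonics on the `d`-dimensional
sphere: `h(l) = (2l+d−1)(l+d−2)!/(l!(d−1)!)`. -/
def sphHarmDim (d l : ℕ) : ℕ :=
  (2 * l + d - 1) * Nat.factorial (l + d - 2) / (Nat.factorial l * Nat.factorial (d - 1))

section SquareSummable

variable {ι : Type*} {f g : ι → ℝ}

lemma memℓp_two_of_summable_sq (hf : Summable fun i => f i ^ 2) : Memℓp f 2 :=
  (memℓp_gen_iff (by norm_num)).2 (by simpa using hf)

lemma summable_mul_of_summable_sq (hf : Summable fun i => f i ^ 2)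
    (hg : Summable fun i => g i ^ 2) : Summable fun i => f i * g i := by
  have h := lp.summable_inner (𝕜 := ℝ) (⟨f, memℓp_two_of_summable_sq hf⟩ : lp (fun _ : ι => ℝ) 2)
    ⟨g, memℓp_two_of_summable_sq hg⟩
  simpa only [Real.inner_apply] using h

lemma tsum_mul_sq_le (hf : Summable fun i => f i ^ 2) (hg : Summable fun i => g i ^ 2) :
    (∑' i, f i * g i) ^ 2 ≤ (∑' i, f i ^ 2) * ∑' i, g i ^ 2 := by
  set F : lp (fun _ : ι => ℝ) 2 := ⟨f, memℓp_two_of_summable_sq hf⟩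
  set G : lp (fun _ : ι => ℝ) 2 := ⟨g, memℓp_two_of_summable_sq hg⟩
  have h := real_inner_mul_inner_self_le F G
  simp only [lp.inner_eq_tsum] at h
  simpa [F, G, sq, mul_comm] using h

lemma HasSum.sq_mul_sq_prod {a : ℝ} (h : HasSum (fun i => f i ^ 2) a) :
    HasSum (fun p : ι × ι => (f p.1 * f p.2) ^ 2) (a ^ 2) := by
  have hnorm : Summable fun i => ‖f i ^ 2‖ := by
    simpa only [Real.norm_eq_abs] using h.summable.abs
  simpa only [mul_pow, sq a] using h.mul h (summable_mul_of_summable_norm hnorm hnorm)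

end SquareSummable

lemma ENNReal.ofReal_le_tsum_ofReal {α : Type*} {x : ℝ} {F : α → ℝ} (hF : ∀ a, 0 ≤ F a)
    (h : Summable F → x ≤ ∑' a, F a) : ENNReal.ofReal x ≤ ∑' a, ENNReal.ofReal (F a) := by
  by_cases htop : ∑' a, ENNReal.ofReal (F a) = ∞
  · exact htop ▸ le_top
  have hF_sum : Summable F := by
    simpa [ENNReal.toReal_ofReal (hF _)] using ENNReal.summable_toReal htop
  rw [← ENNReal.ofReal_tsum_of_nonneg hF hF_sum]
  exact ENNReal.ofReal_le_ofReal (h hF_sum)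

section HilbertBasis

variable {ι E : Type*} [NormedAddCommGroup E] [InnerProductSpace ℝ E]

lemma HilbertBasis.hasSum_inner_mul_inner_apply (b : HilbertBasis ι ℝ E) (T : E →L[ℝ] E)
    (u v : E) : HasSum (fun i => ⟪b i, u⟫ * ⟪T (b i), v⟫) ⟪T u, v⟫ := by
  have h := ((innerSL ℝ v).comp T).hasSum (b.hasSum_repr u)
  simpa [b.repr_apply_apply, real_inner_smul_right, real_inner_comm v] using h

lemma HilbertBasis.exists_inner_ne_zero (b : HilbertBasis ι ℝ E) {u : E} (hu : u ≠ 0) :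
    ∃ i, ⟪b i, u⟫ ≠ 0 := by
  by_contra! h
  refine hu (b.repr.injective ?_)
  ext i
  simp [b.repr_apply_apply, h]

end HilbertBasis

section Eigenbasis

variable {ι E : Type*} [NormedAddCommGroup E] [InnerProductSpace ℝ E]
  {T₁ T₂ : E →L[ℝ] E} {e : HilbertBasis ι ℝ E} {μ : ι → ℝ}

lemma hasSum_sqrt_mul_inner_sq (heig : ∀ i, T₁ (e i) = μ i • e i) (hμ : ∀ i, 0 ≤ μ i) (u : E) :
    HasSum (fun i => (√(μ i) * ⟪e i, u⟫) ^ 2) ⟪T₁ u, u⟫ := by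
  convert e.hasSum_inner_mul_inner_apply T₁ u u using 1
  funext i
  rw [heig, real_inner_smul_left, mul_pow, Real.sq_sqrt (hμ i)]
  ring

lemma inner_apply_self_pos (heig : ∀ i, T₁ (e i) = μ i • e i) (hμ : ∀ i, 0 < μ i) {u : E}
    (hu : u ≠ 0) : 0 < ⟪T₁ u, u⟫ := by
  obtain ⟨i, hi⟩ := e.exists_inner_ne_zero hu
  have hsqrt : 0 < √(μ i) := Real.sqrt_pos.2 (hμ i)
  calc 0 < (√(μ i) * ⟪e i, u⟫) ^ 2 := by positivity
    _ ≤ ⟪T₁ u, u⟫ :=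
      le_hasSum (hasSum_sqrt_mul_inner_sq heig (fun j => (hμ j).le) u) i fun _ _ => sq_nonneg _

variable [DecidableEq ι]

/-- Entry `(m, n)` of the matrix of `T₁^{-1/2} T T₁^{-1/2} - 1` in an eigenbasis `e` of `T₁`
with eigenvalues `μ`. -/
noncomputable def relativeDeviationEntry (T : E →L[ℝ] E) (e : HilbertBasis ι ℝ E) (μ : ι → ℝ)
    (m n : ι) : ℝ :=
  ⟪T (e m), e n⟫ / (√(μ m) * √(μ n)) - if m = n then 1 else 0

lemma hasSum_mul_relativeDeviationEntry (heig : ∀ i, T₁ (e i) = μ i • e i)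
    (hμ : ∀ i, 0 < μ i) (u : E)
    (hA : Summable fun p : ι × ι => relativeDeviationEntry T₂ e μ p.1 p.2 ^ 2) :
    HasSum (fun p : ι × ι => √(μ p.1) * ⟪e p.1, u⟫ * (√(μ p.2) * ⟪e p.2, u⟫) *
      relativeDeviationEntry T₂ e μ p.1 p.2) (⟪T₂ u, u⟫ - ⟪T₁ u, u⟫) := by
  set g := fun i => √(μ i) * ⟪e i, u⟫
  have hg := hasSum_sqrt_mul_inner_sq heig (fun i => (hμ i).le) u
  have hsum := summable_mul_of_summable_sq hg.sq_mul_sq_prod.summable hA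
  have hcancel : ∀ m n, g m * g n * (⟪T₂ (e m), e n⟫ / (√(μ m) * √(μ n))) =
      ⟪e m, u⟫ * (⟪T₂ (e m), e n⟫ * ⟪e n, u⟫) := by
    intro m n
    have := (Real.sqrt_pos.2 (hμ m)).ne'
    have := (Real.sqrt_pos.2 (hμ n)).ne'
    simp only [g]
    field_simp
  have hfiber (m : ι) : HasSum (fun n => g m * g n * relativeDeviationEntry T₂ e μ m n)
      (⟪e m, u⟫ * ⟪T₂ (e m), u⟫ - g m ^ 2) := by
    convert ((e.hasSum_inner_mul_inner (T₂ (e m)) u).mul_left ⟪e m, u⟫).sub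
      (hasSum_ite_eq m (g m ^ 2)) using 1
    · rfl
    · funext n
      simp only [relativeDeviationEntry, mul_sub, hcancel]
      by_cases hmn : m = n
      · subst hmn
        simp [sq]
      · simp [hmn, Ne.symm hmn]
  have houter := (e.hasSum_inner_mul_inner_apply T₂ u u).sub hg
  rw [← (hsum.hasSum.prod_fiberwise hfiber).unique houter]
  exact hsum.hasSum

theorem sq_inner_div_inner_sub_one_le_tsum (heig : ∀ i, T₁ (e i) = μ i • e i)
    (hμ : ∀ i, 0 < μ i) {u : E} (hu : u ≠ 0)
    (hA : Summable fun p : ι × ι => relativeDeviationEntry T₂ e μ p.1 p.2 ^ 2) :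
    (⟪T₂ u, u⟫ / ⟪T₁ u, u⟫ - 1) ^ 2 ≤ ∑' p : ι × ι, relativeDeviationEntry T₂ e μ p.1 p.2 ^ 2 := by
  have hβ : 0 < ⟪T₁ u, u⟫ := inner_apply_self_pos heig hμ hu
  have hw := (hasSum_sqrt_mul_inner_sq heig (fun i => (hμ i).le) u).sq_mul_sq_prod
  have hCS := tsum_mul_sq_le hw.summable hA
  rw [(hasSum_mul_relativeDeviationEntry heig hμ u hA).tsum_eq, hw.tsum_eq] at hCS
  rw [div_sub_one hβ.ne', div_pow, div_le_iff₀ (by positivity)]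
  linarith

end Eigenbasis

theorem scalar_projection_series_le_operator_series_general
    (d : ℕ)
    {𝓗 : Type*} [NormedAddCommGroup 𝓗] [InnerProductSpace ℝ 𝓗]
    (b₁ b₂ : ℕ → 𝓗 →L[ℝ] 𝓗)
    (f : ∀ _ : ℕ, HilbertBasis ℕ ℝ 𝓗)
    (μ : ℕ → ℕ → ℝ)
    (heig : ∀ l n, (b₁ l) (f l n) = μ l n • f l n)
    (hμ : ∀ l n, 0 < μ l n) :
    ∀ u : 𝓗, u ≠ 0 →
      (∑' l : ℕ, (sphHarmDim d l : ℝ≥0∞) *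
          ENNReal.ofReal ((⟪(b₂ l) u, u⟫ / ⟪(b₁ l) u, u⟫ - 1) ^ 2))
        ≤ ∑' l : ℕ, (sphHarmDim d l : ℝ≥0∞) *
            (∑' m : ℕ, ∑' n : ℕ, ENNReal.ofReal
              ((⟪(b₂ l) (f l m), f l n⟫ / (Real.sqrt (μ l m) * Real.sqrt (μ l n))
                - if m = n then (1 : ℝ) else 0) ^ 2)) := by
  intro u hu
  refine ENNReal.tsum_le_tsum fun l => ?_
  gcongr
  exact (ENNReal.ofReal_le_tsum_ofReal (fun _ => sq_nonneg _)
    (sq_inner_div_inner_sub_one_le_tsum (heig l) (hμ l) hu)).trans_eq ENNReal.tsum_prod'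

/-- For two sequences `(b_l^{(1)})`, `(b_l^{(2)})` of compact self-adjoint
positive injective operators on a separable real Hilbert space (playing the role of
operator-valued `d`-Schoenberg coefficients), with `(f_{l,n})` an eigenbasis of `b_l^{(1)}`
with eigenvalues `μ_{l,n} > 0` and `M_l²` the squared Hilbert–Schmidt norm of
`(b_l^{(1)})^{-1/2} b_l^{(2)} (b_l^{(1)})^{-1/2} − I` (written spectrally), for every
direction `u ≠ 0` the scalar-projection series is dominated by the operator-valued one:
`∑_l h(l)(⟨b_l^{(2)}u,u⟩/⟨b_l^{(1)}u,u⟩ − 1)² ≤ ∑_l h(l) M_l²` in `[0,∞]`. -/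
theorem scalar_projection_series_le_operator_series
    (d : ℕ) (hd : 2 ≤ d)
    {𝓗 : Type*} [NormedAddCommGroup 𝓗] [InnerProductSpace ℝ 𝓗] [CompleteSpace 𝓗]
    [TopologicalSpace.SeparableSpace 𝓗]
    (b₁ b₂ : ℕ → 𝓗 →L[ℝ] 𝓗)
    (hb₁compact : ∀ l, IsCompactOperator (b₁ l))
    (hb₂compact : ∀ l, IsCompactOperator (b₂ l))
    (hb₁pos : ∀ l, (b₁ l).IsPositive)
    (hb₂pos : ∀ l, (b₂ l).IsPositive)
    (hb₁inj : ∀ l, Function.Injective (b₁ l))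
    (hb₂inj : ∀ l, Function.Injective (b₂ l))
    (f : ∀ _ : ℕ, HilbertBasis ℕ ℝ 𝓗)
    (μ : ℕ → ℕ → ℝ)
    (heig : ∀ l n, (b₁ l) (f l n) = μ l n • f l n)
    (hμ : ∀ l n, 0 < μ l n) :
    ∀ u : 𝓗, u ≠ 0 →
      (∑' l : ℕ, (sphHarmDim d l : ℝ≥0∞) *
          ENNReal.ofReal ((⟪(b₂ l) u, u⟫ / ⟪(b₁ l) u, u⟫ - 1) ^ 2))
        ≤ ∑' l : ℕ, (sphHarmDim d l : ℝ≥0∞) *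
            (∑' m : ℕ, ∑' n : ℕ, ENNReal.ofReal
              ((⟪(b₂ l) (f l m), f l n⟫ / (Real.sqrt (μ l m) * Real.sqrt (μ l n))
                - if m = n then (1 : ℝ) else 0) ^ 2)) :=
  scalar_projection_series_le_operator_series_general d b₁ b₂ f μ heig hμ
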